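/- arXiv:2202.08544 — 2 statements merged into one kernel-verified Lean document; each statement's English description precedes it below -/
import Mathlib

section
/- Let Π = (Δ, Σ, 𝒱, ℰ) be an LCL problem for Δ-regular unrooted trees, let 𝒮 ⊆ 𝒱, let C ∈ 𝒮, and let 1 ≤ i ≤ j be integers. If there exists a correct half-edge labeling of T_j* in which the node configuration of the root is C and the node configuration of every other degree-Δ node lies in 𝒮, then such a labeling also exists for T_i*. Equivalently, if no such labeling of T_i* exists, then no such labeling of T_j* exists for any j ≥ i. -/
/-- `lclCompat 𝒮 ℰ i τ` : there is a correct half-edge labeling of a copy of the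
rooted tree `T_i` hanging below an edge whose half-edge on the `T_i` side is
labeled `τ`, such that the node configuration of every degree-`Δ` node of this
subtree lies in `𝒮` and every edge configuration lies in `ℰ`. -/
def lclCompat {L : Type} [DecidableEq L] (S E : Set (Multiset L)) : ℕ → L → Prop
  | 0, _ => True
  | i + 1, τ => ∃ C ∈ S, τ ∈ C ∧
      ∀ β ∈ C.erase τ, ∃ τ', ({β, τ'} : Multiset L) ∈ E ∧ lclCompat S E i τ'

/-- For `i ≥ 1`: there exists a correct half-edge labeling of `T_i*` in which the
node configuration of the root is `C` and the node configuration of every other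
degree-`Δ` node lies in `𝒮` (edge configurations lie in `ℰ`). -/
def lclTreeOk {L : Type} [DecidableEq L] (S E : Set (Multiset L)) (i : ℕ)
    (C : Multiset L) : Prop :=
  ∀ β ∈ C, ∃ τ, ({β, τ} : Multiset L) ∈ E ∧ lclCompat S E (i - 1) τ

/-- `trim 𝒮`: configurations `C ∈ 𝒮` such that for every `i ≥ 1` there is a correct
half-edge labeling of `T_i*` with root configuration `C` and all other degree-`Δ`
node configurations in `𝒮`. -/
def lclTrim {L : Type} [DecidableEq L] (S E : Set (Multiset L)) : Set (Multiset L) :=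
  {C | C ∈ S ∧ ∀ i : ℕ, 1 ≤ i → lclTreeOk S E i C}

section

variable {L : Type} [DecidableEq L] (S E : Set (Multiset L))

/-- Truncating every branch of the labeled `T_{n+1}` at depth `n` gives a labeled `T_n`. -/
lemma lclCompat_of_succ : ∀ {n : ℕ} {τ : L}, lclCompat S E (n + 1) τ → lclCompat S E n τ
  | 0, _, _ => trivial
  | _ + 1, _, ⟨C, hCS, hτ, hchildren⟩ =>
    ⟨C, hCS, hτ, fun β hβ =>
      let ⟨τ', hβτ', hτ'⟩ := hchildren β hβ
      ⟨τ', hβτ', lclCompat_of_succ hτ'⟩⟩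

lemma lclCompat_antitone (τ : L) : Antitone fun n => lclCompat S E n τ :=
  antitone_nat_of_succ_le fun _ => lclCompat_of_succ S E

lemma lclTreeOk_antitone (C : Multiset L) : Antitone fun i => lclTreeOk S E i C :=
  fun _ _ hij h β hβ =>
    let ⟨τ, hβτ, hτ⟩ := h β hβ
    ⟨τ, hβτ, lclCompat_antitone S E τ (Nat.sub_le_sub_right hij 1) hτ⟩

end

theorem stmt1_general {L : Type} [DecidableEq L] (E : Set (Multiset L)) (S : Set (Multiset L))
    (C : Multiset L) (i j : ℕ) (hij : i ≤ j)
    (h : lclTreeOk S E j C) : lclTreeOk S E i C :=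
  lclTreeOk_antitone S E C hij h

/-- Monotonicity of labelability of `T_i*` in the height. -/
theorem stmt1 {L : Type} [Fintype L] [DecidableEq L]
    (Δ : ℕ) (hΔ : 1 ≤ Δ) (V E : Set (Multiset L))
    (hV : ∀ C ∈ V, Multiset.card C = Δ)
    (hE : ∀ D ∈ E, Multiset.card D = 2)
    (S : Set (Multiset L)) (hS : S ⊆ V)
    (C : Multiset L) (hC : C ∈ S)
    (i j : ℕ) (hi : 1 ≤ i) (hij : i ≤ j)
    (h : lclTreeOk S E j C) : lclTreeOk S E i C :=
  stmt1_general E S C i j hij h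
end

section
/- Let Π = (Δ, Σ, 𝒱, ℰ) be an LCL problem for Δ-regular unrooted trees. If trim(𝒱) = ∅, then there exists an integer i ≥ 1 such that the tree T_i* admits no correct half-edge labeling at all; in particular, there exists a tree of maximum degree at most Δ on which Π has no correct solution. -/
/-!
A configuration outside `trim(𝒱)` fails on some `T_i*`, hence on all larger ones, since
solvability is antitone in the depth. Node configurations have size `Δ` over a finite
alphabet, so `𝒱` is finite and a single depth defeats every root configuration.
-/

open Filter

section LCL

variable {L : Type} [DecidableEq L] (S E : Set (Multiset L))

theorem lclCompat_antitone_s3 : Antitone (lclCompat S E) := by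
  refine antitone_nat_of_succ_le fun i => ?_
  induction i with
  | zero => exact fun _ _ => trivial
  | succ i ih =>
    rintro τ ⟨C, hC, hτ, hchildren⟩
    refine ⟨C, hC, hτ, fun β hβ => ?_⟩
    obtain ⟨τ', hedge, hτ'⟩ := hchildren β hβ
    exact ⟨τ', hedge, ih τ' hτ'⟩

variable {S E}

theorem lclTreeOk_of_le {i j : ℕ} {C : Multiset L} (hji : j ≤ i) (h : lclTreeOk S E i C) :
    lclTreeOk S E j C := fun β hβ =>
  let ⟨τ, hedge, hτ⟩ := h β hβ
  ⟨τ, hedge, lclCompat_antitone_s3 S E (Nat.sub_le_sub_right hji 1) τ hτ⟩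

theorem eventually_not_lclTreeOk_of_notMem_lclTrim {C : Multiset L} (hCS : C ∈ S)
    (hC : C ∉ lclTrim S E) : ∀ᶠ i in atTop, ¬ lclTreeOk S E i C := by
  obtain ⟨i₀, -, hi₀⟩ : ∃ i₀, 1 ≤ i₀ ∧ ¬ lclTreeOk S E i₀ C := by
    simpa [lclTrim, hCS] using hC
  exact eventually_atTop.2 ⟨i₀, fun _ hi hok => hi₀ (lclTreeOk_of_le hi hok)⟩

end LCL

theorem Multiset.finite_setOf_card_eq (L : Type) [Finite L] (n : ℕ) :
    {C : Multiset L | Multiset.card C = n}.Finite :=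
  (Set.finite_range (fun s : Sym L n => (s : Multiset L))).subset
    fun C hC => ⟨⟨C, hC⟩, rfl⟩

theorem stmt3_general {L : Type} [Fintype L] [DecidableEq L]
    (Δ : ℕ) (V E : Set (Multiset L))
    (hV : ∀ C ∈ V, Multiset.card C = Δ)
    (h : lclTrim V E = ∅) :
    ∃ i : ℕ, 1 ≤ i ∧ ¬ ∃ C ∈ V, lclTreeOk V E i C := by
  have hVfin : V.Finite := (Multiset.finite_setOf_card_eq L Δ).subset hV
  have hall : ∀ᶠ i in atTop, ∀ C ∈ V, ¬ lclTreeOk V E i C :=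
    (eventually_all_finite hVfin).2 fun C hC =>
      eventually_not_lclTreeOk_of_notMem_lclTrim hC (h ▸ Set.notMem_empty C)
  obtain ⟨i, hi, hno⟩ := ((eventually_ge_atTop 1).and hall).exists
  exact ⟨i, hi, fun ⟨C, hC, hok⟩ => hno C hC hok⟩

/-- Unsolvability when `trim(𝒱) = ∅`: some `T_i*` admits no correct
half-edge labeling at all; in particular there is a tree of maximum degree at most
`Δ` on which `Π` has no correct solution. -/
theorem stmt3 {L : Type} [Fintype L] [DecidableEq L]
    (Δ : ℕ) (hΔ : 1 ≤ Δ) (V E : Set (Multiset L))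
    (hV : ∀ C ∈ V, Multiset.card C = Δ)
    (hE : ∀ D ∈ E, Multiset.card D = 2)
    (h : lclTrim V E = ∅) :
    ∃ i : ℕ, 1 ≤ i ∧ ¬ ∃ C ∈ V, lclTreeOk V E i C :=
  stmt3_general Δ V E hV h
end
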